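/- arXiv:2503.21475 — 6 statements merged into one kernel-verified Lean document; each statement's English description precedes it below -/
import Mathlib

section
/- Let μ̄₀ ∈ ℝ, μ̄ ∈ ℝ, σ̄₀² > 0, σ̄² ≥ 0 with |μ̄| ≤ σ̄²/2. Let ρ : [t₀,t₁) → ℝ be continuously differentiable, non-decreasing, with sup ρ ≤ μ̄₀, and let α, β : [t₀,∞) → ℝ be continuous and bounded with −α(t)²/2 ≤ β(t) ≤ −α(t)²/4 for all t. Define f(t) = ((ρ(t) − μ̄₀) − μ̄ − ∫_{t₀}^t β(s) ds)/√(σ̄₀² + σ̄² + ∫_{t₀}^t α(s)² ds). Then f is non-decreasing on [t₀,t₁); if moreover one of the inequalities on β is uniformly strict, then f is strictly increasing. -/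
/-!
Write `D = σ̄₀² + σ̄² + ∫ α²` and split the numerator as `(ρ - μ̄₀) + (-μ̄ - ∫ β)`.
The first quotient `(ρ - μ̄₀)/√D` is non-decreasing because its numerator is nonpositive and
non-decreasing while `√D` is positive and non-decreasing. The derivative of the second quotient
`n/√D` is `(n' D - n D'/2)/D^{3/2}` with `n' = -β` and `D' = α²`. Since `β ≥ -α²/2` gives
`n ≤ σ̄²/2 + (∫ α²)/2`, the bound `-β ≥ α²/4 + δ` makes this numerator at least `α² σ̄₀²/4 + δ D`:
nonnegative in general, and positive when `δ > 0` or when `β ≥ -α²/2 + ε` forces `α² ≥ 4ε`.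
-/

open Set

theorem MonotoneOn.div_of_nonpos {α 𝕜 : Type*} [Preorder α] [Field 𝕜] [LinearOrder 𝕜]
    [IsStrictOrderedRing 𝕜] {s : Set α} {a b : α → 𝕜} (ha : MonotoneOn a s)
    (ha₀ : ∀ x ∈ s, a x ≤ 0) (hb : MonotoneOn b s) (hb₀ : ∀ x ∈ s, 0 < b x) :
    MonotoneOn (fun x => a x / b x) s := by
  intro x hx y hy hxy
  calc a x / b x ≤ a y / b x := div_le_div_of_nonneg_right (ha hx hy hxy) (hb₀ x hx).le
    _ ≤ a y / b y := by
      simpa only [neg_div, neg_le_neg_iff] using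
        div_le_div_of_nonneg_left (neg_nonneg.2 (ha₀ y hy)) (hb₀ x hx) (hb hx hy hxy)

theorem HasDerivAt.div_sqrt {n D : ℝ → ℝ} {n' D' x : ℝ} (hn : HasDerivAt n n' x)
    (hD : HasDerivAt D D' x) (hD₀ : 0 < D x) :
    HasDerivAt (fun y => n y / √(D y)) ((n' * D x - n x * D' / 2) / √(D x) ^ 3) x := by
  refine (hn.div (hD.sqrt hD₀.ne') (Real.sqrt_pos.2 hD₀).ne').congr_deriv ?_
  have hS2 := Real.sq_sqrt hD₀.le
  field_simp
  rw [hS2]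
  ring

theorem monotoneOn_div_sqrt {s : Set ℝ} (hs : Convex ℝ s) {n D n' D' : ℝ → ℝ}
    (hn : ∀ x ∈ s, HasDerivAt n (n' x) x) (hD : ∀ x ∈ s, HasDerivAt D (D' x) x)
    (hD₀ : ∀ x ∈ s, 0 < D x) (hK : ∀ x ∈ interior s, 0 ≤ n' x * D x - n x * D' x / 2) :
    MonotoneOn (fun x => n x / √(D x)) s :=
  monotoneOn_of_hasDerivWithinAt_nonneg hs
    (fun x hx => ((hn x hx).div_sqrt (hD x hx) (hD₀ x hx)).continuousAt.continuousWithinAt)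
    (fun x hx => ((hn x (interior_subset hx)).div_sqrt (hD x (interior_subset hx))
      (hD₀ x (interior_subset hx))).hasDerivWithinAt)
    fun x hx => div_nonneg (hK x hx) (pow_nonneg (Real.sqrt_nonneg _) 3)

theorem strictMonoOn_div_sqrt {s : Set ℝ} (hs : Convex ℝ s) {n D n' D' : ℝ → ℝ}
    (hn : ∀ x ∈ s, HasDerivAt n (n' x) x) (hD : ∀ x ∈ s, HasDerivAt D (D' x) x)
    (hD₀ : ∀ x ∈ s, 0 < D x) (hK : ∀ x ∈ interior s, 0 < n' x * D x - n x * D' x / 2) :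
    StrictMonoOn (fun x => n x / √(D x)) s :=
  strictMonoOn_of_hasDerivWithinAt_pos hs
    (fun x hx => ((hn x hx).div_sqrt (hD x hx) (hD₀ x hx)).continuousAt.continuousWithinAt)
    (fun x hx => ((hn x (interior_subset hx)).div_sqrt (hD x (interior_subset hx))
      (hD₀ x (interior_subset hx))).hasDerivWithinAt)
    fun x hx => div_pos (hK x hx) (pow_pos (Real.sqrt_pos.2 (hD₀ x (interior_subset hx))) 3)

theorem drift_deriv_numerator_lower_bound {α β : ℝ → ℝ} (hα : Continuous α) (hβ : Continuous β)
    {t₀ t σ₀ σ c δ : ℝ} (ht : t₀ ≤ t) (hσ : 0 ≤ σ₀ + σ) (hc : 2 * c ≤ σ)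
    (hlow : ∀ s ∈ Icc t₀ t, -α s ^ 2 / 2 ≤ β s) (hup : β t ≤ -α t ^ 2 / 4 - δ) :
    α t ^ 2 * σ₀ / 4 + δ * (σ₀ + σ + ∫ s in t₀..t, α s ^ 2) ≤
      -β t * (σ₀ + σ + ∫ s in t₀..t, α s ^ 2) - (c - ∫ s in t₀..t, β s) * α t ^ 2 / 2 := by
  have hA : 0 ≤ ∫ s in t₀..t, α s ^ 2 :=
    intervalIntegral.integral_nonneg ht fun s _ => sq_nonneg _
  have hB : -(∫ s in t₀..t, α s ^ 2) / 2 ≤ ∫ s in t₀..t, β s := by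
    rw [neg_div, ← intervalIntegral.integral_div, ← intervalIntegral.integral_neg]
    exact intervalIntegral.integral_mono_on ht ((by fun_prop : Continuous _).intervalIntegrable _ _)
      (hβ.intervalIntegrable _ _) fun s hs => by simpa only [neg_div] using hlow s hs
  nlinarith [mul_le_mul_of_nonneg_right hup (add_nonneg hσ hA),
    mul_le_mul_of_nonneg_left hB (sq_nonneg (α t)), mul_le_mul_of_nonneg_left hc (sq_nonneg (α t))]

theorem standardized_argument_monotone_general
    (t₀ t₁ : ℝ)
    (μ₀ μ : ℝ) (σ₀sq σsq : ℝ) (hσ₀ : 0 < σ₀sq) (hσ : 0 ≤ σsq)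
    (hμ : |μ| ≤ σsq / 2)
    (ρ : ℝ → ℝ)
    (hρmono : ∀ s ∈ Set.Ico t₀ t₁, ∀ t ∈ Set.Ico t₀ t₁, s ≤ t → ρ s ≤ ρ t)
    (hρsup : ∀ t ∈ Set.Ico t₀ t₁, ρ t ≤ μ₀)
    (α β : ℝ → ℝ) (hαcont : Continuous α) (hβcont : Continuous β)
    (hβ : ∀ t ∈ Set.Ico t₀ t₁, -(α t) ^ 2 / 2 ≤ β t ∧ β t ≤ -(α t) ^ 2 / 4)
    (f : ℝ → ℝ)
    (hf : ∀ t, f t = ((ρ t - μ₀) - μ - ∫ s in t₀..t, β s)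
      / Real.sqrt (σ₀sq + σsq + ∫ s in t₀..t, (α s) ^ 2)) :
    MonotoneOn f (Set.Ico t₀ t₁) ∧
    ((∃ ε > 0, (∀ t ∈ Set.Ico t₀ t₁, -(α t) ^ 2 / 2 + ε ≤ β t) ∨
        (∀ t ∈ Set.Ico t₀ t₁, β t ≤ -(α t) ^ 2 / 4 - ε)) →
      StrictMonoOn f (Set.Ico t₀ t₁)) := by
  set D : ℝ → ℝ := fun t => σ₀sq + σsq + ∫ s in t₀..t, α s ^ 2
  have hD : ∀ t, HasDerivAt D (α t ^ 2) t := fun t =>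
    ((hαcont.pow 2).integral_hasStrictDerivAt t₀ t).hasDerivAt.const_add (σ₀sq + σsq)
  have hn : ∀ t, HasDerivAt (fun t => -μ - ∫ s in t₀..t, β s) (-β t) t := fun t =>
    (hβcont.integral_hasStrictDerivAt t₀ t).hasDerivAt.const_sub (-μ)
  have hD₀ : ∀ t ∈ Ico t₀ t₁, 0 < D t := fun t ht => add_pos_of_pos_of_nonneg
    (add_pos_of_pos_of_nonneg hσ₀ hσ) (intervalIntegral.integral_nonneg ht.1 fun _ _ => sq_nonneg _)
  have hK : ∀ δ, (∀ t ∈ Ico t₀ t₁, β t ≤ -α t ^ 2 / 4 - δ) → ∀ t ∈ Ico t₀ t₁,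
      α t ^ 2 * σ₀sq / 4 + δ * D t ≤ -β t * D t - (-μ - ∫ s in t₀..t, β s) * α t ^ 2 / 2 :=
    fun δ hup t ht => drift_deriv_numerator_lower_bound hαcont hβcont ht.1 (by positivity)
      (by linarith [neg_abs_le μ]) (fun s hs => (hβ s ⟨hs.1, hs.2.trans_lt ht.2⟩).1) (hup t ht)
  have hρpart : MonotoneOn (fun t => (ρ t - μ₀) / √(D t)) (Ico t₀ t₁) :=
    MonotoneOn.div_of_nonpos (fun s hs t ht hst => sub_le_sub_right (hρmono s hs t ht hst) μ₀)
      (fun t ht => sub_nonpos.2 (hρsup t ht))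
      (fun s _ t _ hst => Real.sqrt_le_sqrt
        (monotone_of_hasDerivAt_nonneg hD (fun t => sq_nonneg (α t)) hst))
      fun t ht => Real.sqrt_pos.2 (hD₀ t ht)
  have hsplit : f = fun t => (ρ t - μ₀) / √(D t) + (-μ - ∫ s in t₀..t, β s) / √(D t) :=
    funext fun t => by rw [hf, ← add_div]; congr 1; ring
  have hK₀ : ∀ t ∈ Ico t₀ t₁,
      α t ^ 2 * σ₀sq / 4 ≤ -β t * D t - (-μ - ∫ s in t₀..t, β s) * α t ^ 2 / 2 := by
    simpa only [zero_mul, add_zero, sub_zero] using hK 0 fun t ht => by simpa using (hβ t ht).2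
  rw [hsplit]
  refine ⟨hρpart.add (monotoneOn_div_sqrt (convex_Ico t₀ t₁) (fun t _ => hn t) (fun t _ => hD t)
    hD₀ fun t ht => (by positivity : 0 ≤ α t ^ 2 * σ₀sq / 4).trans (hK₀ t (interior_subset ht))), ?_⟩
  rintro ⟨ε, hε, hlow | hup⟩ <;> refine hρpart.add_strictMono (strictMonoOn_div_sqrt
    (convex_Ico t₀ t₁) (fun t _ => hn t) (fun t _ => hD t) hD₀ fun t ht => ?_) <;>
    replace ht := interior_subset ht
  · have hα : 0 < α t ^ 2 := by linarith [hlow t ht, (hβ t ht).2]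
    exact (by positivity : 0 < α t ^ 2 * σ₀sq / 4).trans_le (hK₀ t ht)
  · have := hD₀ t ht
    exact (by positivity : 0 < α t ^ 2 * σ₀sq / 4 + ε * D t).trans_le (hK ε hup t ht)

/-- analytic core of Lemma 4.3(i): the standardized argument
`f(t) = ((ρ(t) − μ̄₀) − μ̄ − ∫_{t₀}^t β)/√(σ̄₀² + σ̄² + ∫_{t₀}^t α²)` is non-decreasing on
`[t₀,t₁)`, and strictly increasing if one of the inequalities on `β` is uniformly strict. -/
theorem standardized_argument_monotone
    (t₀ t₁ : ℝ) (ht : t₀ < t₁)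
    (μ₀ μ : ℝ) (σ₀sq σsq : ℝ) (hσ₀ : 0 < σ₀sq) (hσ : 0 ≤ σsq)
    (hμ : |μ| ≤ σsq / 2)
    (ρ ρ' : ℝ → ℝ)
    (hρderiv : ∀ t ∈ Set.Ico t₀ t₁, HasDerivAt ρ (ρ' t) t)
    (hρ'cont : ContinuousOn ρ' (Set.Ico t₀ t₁))
    (hρmono : ∀ s ∈ Set.Ico t₀ t₁, ∀ t ∈ Set.Ico t₀ t₁, s ≤ t → ρ s ≤ ρ t)
    (hρsup : ∀ t ∈ Set.Ico t₀ t₁, ρ t ≤ μ₀)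
    (α β : ℝ → ℝ) (hαcont : Continuous α) (hβcont : Continuous β)
    (hαbdd : ∃ C, ∀ t, |α t| ≤ C) (hβbdd : ∃ C, ∀ t, |β t| ≤ C)
    (hβ : ∀ t ∈ Set.Ico t₀ t₁, -(α t) ^ 2 / 2 ≤ β t ∧ β t ≤ -(α t) ^ 2 / 4)
    (f : ℝ → ℝ)
    (hf : ∀ t, f t = ((ρ t - μ₀) - μ - ∫ s in t₀..t, β s)
      / Real.sqrt (σ₀sq + σsq + ∫ s in t₀..t, (α s) ^ 2)) :
    MonotoneOn f (Set.Ico t₀ t₁) ∧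
    ((∃ ε > 0, (∀ t ∈ Set.Ico t₀ t₁, -(α t) ^ 2 / 2 + ε ≤ β t) ∨
        (∀ t ∈ Set.Ico t₀ t₁, β t ≤ -(α t) ^ 2 / 4 - ε)) →
      StrictMonoOn f (Set.Ico t₀ t₁)) :=
  standardized_argument_monotone_general t₀ t₁ μ₀ μ σ₀sq σsq hσ₀ hσ hμ ρ hρmono hρsup α β hαcont
    hβcont hβ f hf
end

section
/- Let μ̄₀, μ̄ ∈ ℝ, σ̄₀² > 0, σ̄² ≥ 0 with |μ̄| ≤ σ̄²/2. Let ρ be C¹, non-increasing, with inf ρ ≥ μ̄₀, and α, β continuous bounded with α(t)²/4 ≤ β(t) ≤ α(t)²/2 for all t. Then f(t) = ((ρ(t) − μ̄₀) − μ̄ − ∫_{t₀}^t β ds)/√(σ̄₀² + σ̄² + ∫_{t₀}^t α² ds) is non-increasing on [t₀,t₁), and strictly decreasing if one of the inequalities on β is uniformly strict. -/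
open Set

/-!
Split `f` as `(ρ - μ̄₀) / √V + (-μ̄ - ∫β) / √V` with `V = σ̄₀² + σ̄² + ∫α²`. The first summand is a
nonnegative antitone function divided by a positive monotone one. For the second, `M / √V` with
`M = -μ̄ - ∫β`, the quotient rule puts the sign of the derivative in `-β V - M α² / 2`, which equals
`-((β - α²/4) V + (α²/2)(M + V/2))`. Integrating `β ≤ α²/2` and using `μ̄ ≤ σ̄²/2` gives
`M + V/2 ≥ σ̄₀²/2 > 0`, so both products are nonnegative; a uniform gap in either inequality on `β`
makes one of them positive.
-/

theorem AntitoneOn.div_of_monotoneOn {ι 𝕜 : Type*} [Preorder ι] [Field 𝕜] [LinearOrder 𝕜]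
    [IsStrictOrderedRing 𝕜] {f g : ι → 𝕜} {s : Set ι} (hf : AntitoneOn f s) (hg : MonotoneOn g s)
    (hf₀ : ∀ x ∈ s, 0 ≤ f x) (hg₀ : ∀ x ∈ s, 0 < g x) : AntitoneOn (fun x => f x / g x) s :=
  fun x hx _ hy hxy => div_le_div₀ (hf₀ x hx) (hf hx hy hxy) (hg₀ x hx) (hg hx hy hxy)

theorem HasDerivAt.div_sqrt_s9 {N V : ℝ → ℝ} {n v t : ℝ} (hN : HasDerivAt N n t)
    (hV : HasDerivAt V v t) (hVt : 0 < V t) :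
    HasDerivAt (fun x => N x / √(V x)) ((n * V t - N t * v / 2) / (V t * √(V t))) t := by
  have hsqrt : √(V t) ≠ 0 := Real.sqrt_ne_zero'.2 hVt
  refine (hN.div (hV.sqrt hVt.ne') hsqrt).congr_deriv ?_
  rw [Real.sq_sqrt hVt.le]
  field_simp
  rw [Real.sq_sqrt hVt.le]
  ring

section DivSqrt

variable {N V n v : ℝ → ℝ} {D : Set ℝ}

theorem continuousOn_div_sqrt (hN : ∀ t ∈ D, HasDerivAt N (n t) t)
    (hV : ∀ t ∈ D, HasDerivAt V (v t) t) (hV₀ : ∀ t ∈ D, 0 < V t) :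
    ContinuousOn (fun t => N t / √(V t)) D :=
  fun t ht => ((hN t ht).div_sqrt_s9 (hV t ht) (hV₀ t ht)).continuousAt.continuousWithinAt

theorem antitoneOn_div_sqrt (hD : Convex ℝ D) (hN : ∀ t ∈ D, HasDerivAt N (n t) t)
    (hV : ∀ t ∈ D, HasDerivAt V (v t) t) (hV₀ : ∀ t ∈ D, 0 < V t)
    (hsign : ∀ t ∈ interior D, n t * V t ≤ N t * v t / 2) :
    AntitoneOn (fun t => N t / √(V t)) D := by
  refine antitoneOn_of_hasDerivWithinAt_nonpos
    (f' := fun t => (n t * V t - N t * v t / 2) / (V t * √(V t))) hD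
    (continuousOn_div_sqrt hN hV hV₀) (fun t ht => ?_) fun t ht => ?_
  · have ht' := interior_subset ht
    exact ((hN t ht').div_sqrt_s9 (hV t ht') (hV₀ t ht')).hasDerivWithinAt
  · have hV₀t := hV₀ t (interior_subset ht)
    exact div_nonpos_of_nonpos_of_nonneg (by linarith [hsign t ht]) (by positivity)

theorem strictAntiOn_div_sqrt (hD : Convex ℝ D) (hN : ∀ t ∈ D, HasDerivAt N (n t) t)
    (hV : ∀ t ∈ D, HasDerivAt V (v t) t) (hV₀ : ∀ t ∈ D, 0 < V t)
    (hsign : ∀ t ∈ interior D, n t * V t < N t * v t / 2) :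
    StrictAntiOn (fun t => N t / √(V t)) D := by
  refine strictAntiOn_of_hasDerivWithinAt_neg
    (f' := fun t => (n t * V t - N t * v t / 2) / (V t * √(V t))) hD
    (continuousOn_div_sqrt hN hV hV₀) (fun t ht => ?_) fun t ht => ?_
  · have ht' := interior_subset ht
    exact ((hN t ht').div_sqrt_s9 (hV t ht') (hV₀ t ht')).hasDerivWithinAt
  · have hV₀t := hV₀ t (interior_subset ht)
    exact div_neg_of_neg_of_pos (by linarith [hsign t ht]) (by positivity)

end DivSqrt

section Drift

variable {α β : ℝ → ℝ} {t₀ t₁ c v₀ : ℝ}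

theorem monotone_add_integral_sq (hα : Continuous α) (v₀ t₀ : ℝ) :
    Monotone fun t => v₀ + ∫ s in t₀..t, α s ^ 2 :=
  monotone_of_hasDerivAt_nonneg
    (fun t => ((hα.pow 2).integral_hasStrictDerivAt t₀ t).hasDerivAt.const_add v₀)
    fun t => sq_nonneg (α t)

theorem le_add_integral_sq (hα : Continuous α) {t : ℝ} (ht : t₀ ≤ t) :
    v₀ ≤ v₀ + ∫ s in t₀..t, α s ^ 2 := by
  simpa using monotone_add_integral_sq hα v₀ t₀ ht

theorem add_half_le_sub_integral_add_half (hα : Continuous α) (hβ : Continuous β)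
    (hβα : ∀ t ∈ Ico t₀ t₁, β t ≤ α t ^ 2 / 2) {t : ℝ} (ht : t ∈ Ico t₀ t₁) :
    c + v₀ / 2 ≤ (c - ∫ s in t₀..t, β s) + (v₀ + ∫ s in t₀..t, α s ^ 2) / 2 := by
  have hint : ∫ s in t₀..t, β s ≤ ∫ s in t₀..t, α s ^ 2 / 2 :=
    intervalIntegral.integral_mono_on ht.1 (hβ.intervalIntegrable _ _)
      (((hα.pow 2).div_const 2).intervalIntegrable _ _)
      fun s hs => hβα s ⟨hs.1, hs.2.trans_lt ht.2⟩
  rw [intervalIntegral.integral_div] at hint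
  linarith

theorem antitoneOn_sub_integral_div_sqrt (hα : Continuous α) (hβ : Continuous β) (hv₀ : 0 < v₀)
    (hc : 0 ≤ c + v₀ / 2)
    (hβα : ∀ t ∈ Ico t₀ t₁, α t ^ 2 / 4 ≤ β t ∧ β t ≤ α t ^ 2 / 2) :
    AntitoneOn (fun t => (c - ∫ s in t₀..t, β s) / √(v₀ + ∫ s in t₀..t, α s ^ 2))
      (Ico t₀ t₁) := by
  refine antitoneOn_div_sqrt (n := fun t => -β t) (v := fun t => α t ^ 2) (convex_Ico t₀ t₁)
    (fun t _ => (hβ.integral_hasStrictDerivAt t₀ t).hasDerivAt.const_sub c)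
    (fun t _ => ((hα.pow 2).integral_hasStrictDerivAt t₀ t).hasDerivAt.const_add v₀)
    (fun t ht => hv₀.trans_le (le_add_integral_sq hα ht.1)) fun t ht => ?_
  have ht' := interior_subset ht
  have hMV := add_half_le_sub_integral_add_half (c := c) (v₀ := v₀) hα hβ
    (fun s hs => (hβα s hs).2) ht'
  set M := c - ∫ s in t₀..t, β s
  set V := v₀ + ∫ s in t₀..t, α s ^ 2
  have hV : 0 ≤ V := hv₀.le.trans (le_add_integral_sq hα ht'.1)
  suffices 0 ≤ (β t - α t ^ 2 / 4) * V + α t ^ 2 / 2 * (M + V / 2) by linear_combination this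
  exact add_nonneg (mul_nonneg (by linarith [(hβα t ht').1]) hV)
    (mul_nonneg (by positivity) (hc.trans hMV))

theorem strictAntiOn_sub_integral_div_sqrt (hα : Continuous α) (hβ : Continuous β) (hv₀ : 0 < v₀)
    (hc : 0 < c + v₀ / 2)
    (hβα : ∀ t ∈ Ico t₀ t₁, α t ^ 2 / 4 ≤ β t ∧ β t ≤ α t ^ 2 / 2) {ε : ℝ} (hε : 0 < ε)
    (hgap : (∀ t ∈ Ico t₀ t₁, α t ^ 2 / 4 + ε ≤ β t) ∨ (∀ t ∈ Ico t₀ t₁, β t ≤ α t ^ 2 / 2 - ε)) :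
    StrictAntiOn (fun t => (c - ∫ s in t₀..t, β s) / √(v₀ + ∫ s in t₀..t, α s ^ 2))
      (Ico t₀ t₁) := by
  refine strictAntiOn_div_sqrt (n := fun t => -β t) (v := fun t => α t ^ 2) (convex_Ico t₀ t₁)
    (fun t _ => (hβ.integral_hasStrictDerivAt t₀ t).hasDerivAt.const_sub c)
    (fun t _ => ((hα.pow 2).integral_hasStrictDerivAt t₀ t).hasDerivAt.const_add v₀)
    (fun t ht => hv₀.trans_le (le_add_integral_sq hα ht.1)) fun t ht => ?_
  have ht' := interior_subset ht
  have hMV := add_half_le_sub_integral_add_half (c := c) (v₀ := v₀) hα hβ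
    (fun s hs => (hβα s hs).2) ht'
  set M := c - ∫ s in t₀..t, β s
  set V := v₀ + ∫ s in t₀..t, α s ^ 2
  have hV : 0 < V := hv₀.trans_le (le_add_integral_sq hα ht'.1)
  have hlow := (hβα t ht').1
  suffices 0 < (β t - α t ^ 2 / 4) * V + α t ^ 2 / 2 * (M + V / 2) by linear_combination this
  rcases hgap with hgap | hgap
  · exact add_pos_of_pos_of_nonneg (mul_pos (by linarith [hgap t ht']) hV)
      (mul_nonneg (by positivity) (hc.trans_le hMV).le)
  · exact add_pos_of_nonneg_of_pos (mul_nonneg (by linarith) hV.le)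
      (mul_pos (by linarith [hgap t ht']) (hc.trans_le hMV))

end Drift

theorem standardized_argument_antitone_general
    (t₀ t₁ : ℝ)
    (μ₀ μ : ℝ) (σ₀sq σsq : ℝ) (hσ₀ : 0 < σ₀sq)
    (hμ : |μ| ≤ σsq / 2)
    (ρ : ℝ → ℝ)
    (hρmono : ∀ s ∈ Set.Ico t₀ t₁, ∀ t ∈ Set.Ico t₀ t₁, s ≤ t → ρ t ≤ ρ s)
    (hρinf : ∀ t ∈ Set.Ico t₀ t₁, μ₀ ≤ ρ t)
    (α β : ℝ → ℝ) (hαcont : Continuous α) (hβcont : Continuous β)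
    (hβ : ∀ t ∈ Set.Ico t₀ t₁, (α t) ^ 2 / 4 ≤ β t ∧ β t ≤ (α t) ^ 2 / 2)
    (f : ℝ → ℝ)
    (hf : ∀ t, f t = ((ρ t - μ₀) - μ - ∫ s in t₀..t, β s)
      / Real.sqrt (σ₀sq + σsq + ∫ s in t₀..t, (α s) ^ 2)) :
    AntitoneOn f (Set.Ico t₀ t₁) ∧
    ((∃ ε > 0, (∀ t ∈ Set.Ico t₀ t₁, (α t) ^ 2 / 4 + ε ≤ β t) ∨
        (∀ t ∈ Set.Ico t₀ t₁, β t ≤ (α t) ^ 2 / 2 - ε)) →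
      StrictAntiOn f (Set.Ico t₀ t₁)) := by
  have hv₀ : 0 < σ₀sq + σsq := by linarith [abs_nonneg μ]
  have hc : 0 < -μ + (σ₀sq + σsq) / 2 := by linarith [le_abs_self μ]
  have hsplit : f = fun t => (ρ t - μ₀) / √(σ₀sq + σsq + ∫ s in t₀..t, α s ^ 2) +
      (-μ - ∫ s in t₀..t, β s) / √(σ₀sq + σsq + ∫ s in t₀..t, α s ^ 2) := by
    funext t
    rw [hf]
    ring
  have hρpart : AntitoneOn (fun t => (ρ t - μ₀) / √(σ₀sq + σsq + ∫ s in t₀..t, α s ^ 2))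
      (Ico t₀ t₁) :=
    AntitoneOn.div_of_monotoneOn (fun s hs t ht hst => sub_le_sub_right (hρmono s hs t ht hst) μ₀)
      (fun s _ t _ hst => Real.sqrt_le_sqrt (monotone_add_integral_sq hαcont _ t₀ hst))
      (fun t ht => sub_nonneg.2 (hρinf t ht))
      fun t ht => Real.sqrt_pos.2 (hv₀.trans_le (le_add_integral_sq hαcont ht.1))
  rw [hsplit]
  exact ⟨hρpart.add (antitoneOn_sub_integral_div_sqrt hαcont hβcont hv₀ hc.le hβ),
    fun ⟨ε, hε, hgap⟩ =>
      hρpart.add_strictAnti (strictAntiOn_sub_integral_div_sqrt hαcont hβcont hv₀ hc hβ hε hgap)⟩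

/-- analytic core of Lemma 4.3(ii): the standardized argument
`f(t) = ((ρ(t) − μ̄₀) − μ̄ − ∫_{t₀}^t β)/√(σ̄₀² + σ̄² + ∫_{t₀}^t α²)` is non-increasing on
`[t₀,t₁)`, and strictly decreasing if one of the inequalities on `β` is uniformly strict. -/
theorem standardized_argument_antitone
    (t₀ t₁ : ℝ) (ht : t₀ < t₁)
    (μ₀ μ : ℝ) (σ₀sq σsq : ℝ) (hσ₀ : 0 < σ₀sq) (hσ : 0 ≤ σsq)
    (hμ : |μ| ≤ σsq / 2)
    (ρ ρ' : ℝ → ℝ)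
    (hρderiv : ∀ t ∈ Set.Ico t₀ t₁, HasDerivAt ρ (ρ' t) t)
    (hρ'cont : ContinuousOn ρ' (Set.Ico t₀ t₁))
    (hρmono : ∀ s ∈ Set.Ico t₀ t₁, ∀ t ∈ Set.Ico t₀ t₁, s ≤ t → ρ t ≤ ρ s)
    (hρinf : ∀ t ∈ Set.Ico t₀ t₁, μ₀ ≤ ρ t)
    (α β : ℝ → ℝ) (hαcont : Continuous α) (hβcont : Continuous β)
    (hαbdd : ∃ C, ∀ t, |α t| ≤ C) (hβbdd : ∃ C, ∀ t, |β t| ≤ C)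
    (hβ : ∀ t ∈ Set.Ico t₀ t₁, (α t) ^ 2 / 4 ≤ β t ∧ β t ≤ (α t) ^ 2 / 2)
    (f : ℝ → ℝ)
    (hf : ∀ t, f t = ((ρ t - μ₀) - μ - ∫ s in t₀..t, β s)
      / Real.sqrt (σ₀sq + σsq + ∫ s in t₀..t, (α s) ^ 2)) :
    AntitoneOn f (Set.Ico t₀ t₁) ∧
    ((∃ ε > 0, (∀ t ∈ Set.Ico t₀ t₁, (α t) ^ 2 / 4 + ε ≤ β t) ∨
        (∀ t ∈ Set.Ico t₀ t₁, β t ≤ (α t) ^ 2 / 2 - ε)) →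
      StrictAntiOn f (Set.Ico t₀ t₁)) :=
  standardized_argument_antitone_general t₀ t₁ μ₀ μ σ₀sq σsq hσ₀ hμ ρ hρmono hρinf α β hαcont hβcont
    hβ f hf
end

section
/- Let f : [t₀,t₁) → ℝ be a differentiable function whose derivative satisfies f'(t) = g(t)/(2(σ̄₀² + σ̄² + ∫_{t₀}^t α(s)² ds)^{3/2}) where g(t) = α(t)²(∫_{t₀}^t β(s) ds + μ̄ + (μ̄₀ − ρ(t))) + 2(ρ'(t) − β(t))(σ̄₀² + σ̄² + ∫_{t₀}^t α(s)² ds). If ρ' ≥ 0, ρ ≤ μ̄₀, β(t) ∈ [−α(t)²/2, −α(t)²/4], and |μ̄| ≤ σ̄²/2, then g(t) ≥ α(t)²(σ̄²/2 − |μ̄|) ≥ 0 for all t ∈ (t₀,t₁). -/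
open intervalIntegral Set

/-- The drift term `2(r' - b)·S` contributes at least `a²/2 · S`, whose `a² I / 2` part exactly
cancels the worst case `-I/2` of `B`; what is left is `a²(μ + (σ₀² + σ²)/2)`. -/
lemma sq_mul_half_sub_abs_le_of_drift_bounds {a I B b r' ρ μ₀ μ σ₀sq σsq : ℝ}
    (hI : 0 ≤ I) (hB : -I / 2 ≤ B) (hb : b ≤ -a ^ 2 / 4) (hr' : 0 ≤ r') (hρ : ρ ≤ μ₀)
    (hσ₀ : 0 ≤ σ₀sq) (hσ : 0 ≤ σsq) :
    a ^ 2 * (σsq / 2 - |μ|) ≤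
      a ^ 2 * (B + μ + (μ₀ - ρ)) + 2 * (r' - b) * (σ₀sq + σsq + I) := by
  have hS : 0 ≤ σ₀sq + σsq + I := by positivity
  have hdrift : a ^ 2 / 2 * (σ₀sq + σsq + I) ≤ 2 * (r' - b) * (σ₀sq + σsq + I) :=
    mul_le_mul_of_nonneg_right (by linarith) hS
  have hmain : a ^ 2 * (-I / 2 + μ) ≤ a ^ 2 * (B + μ + (μ₀ - ρ)) :=
    mul_le_mul_of_nonneg_left (by linarith) (sq_nonneg a)
  have hμ : a ^ 2 * (σsq / 2 - |μ|) ≤ a ^ 2 * (μ + σsq / 2 + σ₀sq / 2) :=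
    mul_le_mul_of_nonneg_left (by linarith [neg_abs_le μ]) (sq_nonneg a)
  linarith

lemma neg_half_integral_sq_le_integral {f g : ℝ → ℝ} {a b : ℝ} (hab : a ≤ b)
    (hf : IntervalIntegrable (fun s => f s ^ 2) MeasureTheory.volume a b)
    (hg : IntervalIntegrable g MeasureTheory.volume a b)
    (hfg : ∀ s ∈ Icc a b, -f s ^ 2 / 2 ≤ g s) :
    -(∫ s in a..b, f s ^ 2) / 2 ≤ ∫ s in a..b, g s := by
  have hmono := integral_mono_on hab (hf.neg.div_const 2) hg hfg
  simpa only [Pi.neg_apply, integral_div, integral_neg] using hmono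

theorem numerator_nonneg_general
    (t₀ t₁ : ℝ)
    (μ₀ μ : ℝ) (σ₀sq σsq : ℝ) (hσ₀ : 0 < σ₀sq) (hσ : 0 ≤ σsq)
    (hμ : |μ| ≤ σsq / 2)
    (ρ ρ' : ℝ → ℝ)
    (hρ' : ∀ t ∈ Set.Ioo t₀ t₁, 0 ≤ ρ' t)
    (hρ : ∀ t ∈ Set.Ioo t₀ t₁, ρ t ≤ μ₀)
    (α β : ℝ → ℝ) (hαcont : Continuous α) (hβcont : Continuous β)
    (hβ : ∀ t, t₀ ≤ t → t < t₁ → -(α t) ^ 2 / 2 ≤ β t ∧ β t ≤ -(α t) ^ 2 / 4)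
    (g : ℝ → ℝ)
    (hg : ∀ t, g t = (α t) ^ 2 * ((∫ s in t₀..t, β s) + μ + (μ₀ - ρ t))
      + 2 * (ρ' t - β t) * (σ₀sq + σsq + ∫ s in t₀..t, (α s) ^ 2)) :
    ∀ t ∈ Set.Ioo t₀ t₁, (α t) ^ 2 * (σsq / 2 - |μ|) ≤ g t ∧
      0 ≤ (α t) ^ 2 * (σsq / 2 - |μ|) := by
  intro t ht
  refine ⟨?_, mul_nonneg (sq_nonneg _) (by linarith)⟩
  have hβ_integral : -(∫ s in t₀..t, α s ^ 2) / 2 ≤ ∫ s in t₀..t, β s :=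
    neg_half_integral_sq_le_integral ht.1.le ((hαcont.pow 2).intervalIntegrable _ _)
      (hβcont.intervalIntegrable _ _) fun s hs => (hβ s hs.1 (hs.2.trans_lt ht.2)).1
  rw [hg t]
  exact sq_mul_half_sub_abs_le_of_drift_bounds
    (integral_nonneg ht.1.le fun s _ => sq_nonneg (α s)) hβ_integral
    (hβ t ht.1.le ht.2).2 (hρ' t ht) (hρ t ht) hσ₀.le hσ

/-- key inequality (eq_g1) in the proof of Lemma 4.3(i): under the sign
conditions on `ρ`, `β` and `μ̄`, the numerator `g` of `f'` satisfies
`g(t) ≥ α(t)²(σ̄²/2 − |μ̄|) ≥ 0` on `(t₀,t₁)`. -/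
theorem numerator_nonneg
    (t₀ t₁ : ℝ) (ht : t₀ < t₁)
    (μ₀ μ : ℝ) (σ₀sq σsq : ℝ) (hσ₀ : 0 < σ₀sq) (hσ : 0 ≤ σsq)
    (hμ : |μ| ≤ σsq / 2)
    (ρ ρ' : ℝ → ℝ)
    (hρderiv : ∀ t ∈ Set.Ioo t₀ t₁, HasDerivAt ρ (ρ' t) t)
    (hρ' : ∀ t ∈ Set.Ioo t₀ t₁, 0 ≤ ρ' t)
    (hρ : ∀ t ∈ Set.Ioo t₀ t₁, ρ t ≤ μ₀)
    (α β : ℝ → ℝ) (hαcont : Continuous α) (hβcont : Continuous β)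
    (hβ : ∀ t, t₀ ≤ t → t < t₁ → -(α t) ^ 2 / 2 ≤ β t ∧ β t ≤ -(α t) ^ 2 / 4)
    (g : ℝ → ℝ)
    (hg : ∀ t, g t = (α t) ^ 2 * ((∫ s in t₀..t, β s) + μ + (μ₀ - ρ t))
      + 2 * (ρ' t - β t) * (σ₀sq + σsq + ∫ s in t₀..t, (α s) ^ 2)) :
    ∀ t ∈ Set.Ioo t₀ t₁, (α t) ^ 2 * (σsq / 2 - |μ|) ≤ g t ∧
      0 ≤ (α t) ^ 2 * (σsq / 2 - |μ|) :=
  numerator_nonneg_general t₀ t₁ μ₀ μ σ₀sq σsq hσ₀ hσ hμ ρ ρ' hρ' hρ α β hαcont hβcont hβ g hg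
end

section
/- Let Φ be the standard normal CDF, C > 0, σ̄₀ > 0, and let 𝒜, 𝓑 : [0,∞) → ℝ be measurable with 𝒜(t)² ≤ C and −𝒜(t)²/2 ≤ 𝓑(t) ≤ −𝒜(t)²/4 for all t. Suppose ρ : [0,∞) → ℝ satisfies ρ(T) ≤ μ̄₀ and Φ((ρ(T) − μ̄₀ − ∫₀^T 𝓑(u)du)/√(σ̄₀² + ∫₀^T 𝒜(u)² du)) = y for some T > 0 and y ∈ (0,1). Then T ≥ (2σ̄₀/C)·Φ⁻¹(y). -/
/-! The drift satisfies `-∫₀ᵀ 𝓑 ≤ ½ ∫₀ᵀ 𝒜² ≤ CT/2` and the denominator is at least `σ̄₀`, so the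
argument of `Φ` at the hitting time is at most `CT/(2σ̄₀)`; since `Φ` is injective, `Φ⁻¹(y)` is
exactly that argument. -/

open ProbabilityTheory MeasureTheory Set

lemma cdf_strictMono_of_absolutelyContinuous (μ : Measure ℝ) [IsProbabilityMeasure μ]
    (hμ : volume ≪ μ) : StrictMono (cdf μ) := by
  intro a b hab
  have hIoc : μ (Ioc a b) ≠ 0 := fun h ↦ by
    simpa [Real.volume_Ioc, hab.not_ge] using hμ h
  rw [← measure_cdf μ, StieltjesFunction.measure_Ioc, ENNReal.ofReal_ne_zero_iff] at hIoc
  exact sub_pos.1 hIoc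

lemma intervalIntegral_mono_of_nonneg {f g : ℝ → ℝ} {a b : ℝ} (hab : a ≤ b)
    (hf : ∀ x, 0 ≤ f x) (hg : IntervalIntegrable g volume a b) (hfg : ∀ x, f x ≤ g x) :
    ∫ x in a..b, f x ≤ ∫ x in a..b, g x := by
  rw [intervalIntegral.integral_of_le hab, intervalIntegral.integral_of_le hab]
  exact integral_mono_of_nonneg (.of_forall hf) hg.1 (.of_forall hfg)

lemma div_sqrt_sq_add_le {N M σ I : ℝ} (hσ : 0 < σ) (hI : 0 ≤ I) (hN : N ≤ M) (hM : 0 ≤ M) :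
    N / √(σ ^ 2 + I) ≤ M / σ := by
  have hσ_le : σ ≤ √(σ ^ 2 + I) := Real.le_sqrt_of_sq_le (by linarith)
  calc N / √(σ ^ 2 + I) ≤ M / √(σ ^ 2 + I) := by gcongr
    _ ≤ M / σ := by gcongr

theorem globality_level_time_bound_general
    (C σ₀ : ℝ) (hC : 0 < C) (hσ₀ : 0 < σ₀)
    (𝒜 𝓑 : ℝ → ℝ) (h𝒜m : Measurable 𝒜)
    (h𝒜 : ∀ t, (𝒜 t) ^ 2 ≤ C)
    (h𝓑 : ∀ t, -(𝒜 t) ^ 2 / 2 ≤ 𝓑 t ∧ 𝓑 t ≤ -(𝒜 t) ^ 2 / 4)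
    (μ₀ : ℝ) (ρ : ℝ → ℝ)
    (T : ℝ) (hT : 0 < T) (hρT : ρ T ≤ μ₀)
    (y : ℝ)
    (hhit : cdf (gaussianReal 0 1)
        ((ρ T - μ₀ - ∫ u in (0:ℝ)..T, 𝓑 u)
          / Real.sqrt (σ₀ ^ 2 + ∫ u in (0:ℝ)..T, (𝒜 u) ^ 2)) = y) :
    T ≥ (2 * σ₀ / C) * Function.invFun (fun x => cdf (gaussianReal 0 1) x) y := by
  set I := ∫ u in (0:ℝ)..T, (𝒜 u) ^ 2
  have hΦ : StrictMono (cdf (gaussianReal 0 1)) :=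
    cdf_strictMono_of_absolutelyContinuous _ (gaussianReal_absolutelyContinuous' 0 one_ne_zero)
  rw [← hhit, Function.leftInverse_invFun hΦ.injective]
  have hI_nonneg : 0 ≤ I := intervalIntegral.integral_nonneg hT.le fun u _ ↦ sq_nonneg _
  have hI_le : I ≤ C * T := by
    have := intervalIntegral.norm_integral_le_of_norm_le_const (a := 0) (b := T)
      (f := fun u ↦ 𝒜 u ^ 2) fun u _ ↦ by simpa using h𝒜 u
    rwa [Real.norm_of_nonneg hI_nonneg, sub_zero, abs_of_pos hT] at this
  have hA2_int : IntervalIntegrable (fun u ↦ 𝒜 u ^ 2) volume 0 T :=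
    (intervalIntegrable_const (c := C)).mono_fun (h𝒜m.pow_const 2).aestronglyMeasurable
      (.of_forall fun u ↦ by simpa [abs_of_pos hC] using h𝒜 u)
  have hB_le : -∫ u in (0:ℝ)..T, 𝓑 u ≤ I / 2 := by
    rw [← intervalIntegral.integral_neg, ← intervalIntegral.integral_div]
    exact intervalIntegral_mono_of_nonneg hT.le (fun u ↦ by nlinarith [(h𝓑 u).2, sq_nonneg (𝒜 u)])
      (hA2_int.div_const 2) fun u ↦ by linarith [(h𝓑 u).1]
  have hx : (ρ T - μ₀ - ∫ u in (0:ℝ)..T, 𝓑 u) / √(σ₀ ^ 2 + I) ≤ C * T / 2 / σ₀ :=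
    div_sqrt_sq_add_le hσ₀ hI_nonneg (by linarith) (by positivity)
  calc 2 * σ₀ / C * _ ≤ 2 * σ₀ / C * (C * T / 2 / σ₀) := by gcongr
    _ = T := by field_simp

/-- quantitative globality estimate from Theorem 4.2(c):
if `Φ((ρ(T) − μ̄₀ − ∫₀^T 𝓑)/√(σ̄₀² + ∫₀^T 𝒜²)) = y` with `𝒜² ≤ C` and
`−𝒜²/2 ≤ 𝓑 ≤ −𝒜²/4`, and `ρ(T) ≤ μ̄₀`, then `T ≥ (2σ̄₀/C)·Φ⁻¹(y)`. -/
theorem globality_level_time_bound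
    (C σ₀ : ℝ) (hC : 0 < C) (hσ₀ : 0 < σ₀)
    (𝒜 𝓑 : ℝ → ℝ) (h𝒜m : Measurable 𝒜) (h𝓑m : Measurable 𝓑)
    (h𝒜 : ∀ t, (𝒜 t) ^ 2 ≤ C)
    (h𝓑 : ∀ t, -(𝒜 t) ^ 2 / 2 ≤ 𝓑 t ∧ 𝓑 t ≤ -(𝒜 t) ^ 2 / 4)
    (μ₀ : ℝ) (ρ : ℝ → ℝ)
    (T : ℝ) (hT : 0 < T) (hρT : ρ T ≤ μ₀)
    (y : ℝ) (hy : y ∈ Set.Ioo (0 : ℝ) 1)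
    (hhit : cdf (gaussianReal 0 1)
        ((ρ T - μ₀ - ∫ u in (0:ℝ)..T, 𝓑 u)
          / Real.sqrt (σ₀ ^ 2 + ∫ u in (0:ℝ)..T, (𝒜 u) ^ 2)) = y) :
    T ≥ (2 * σ₀ / C) * Function.invFun (fun x => cdf (gaussianReal 0 1) x) y :=
  globality_level_time_bound_general C σ₀ hC hσ₀ 𝒜 𝓑 h𝒜m h𝒜 h𝓑 μ₀ ρ T hT hρT y hhit
end

section
/- Let ψ : [t₀, T) → ℝ be continuous with ψ(t₀) = y, and suppose that on every subinterval (u₀, u₁) ⊆ (t₀, T) on which ψ < y throughout, ψ is strictly increasing, and on every subinterval on which ψ ≥ y throughout (with ψ = y at the left endpoint), ψ is strictly decreasing. Then no such function ψ exists on any interval [t₀, t₀+ε) with ε > 0; i.e. the assumptions are contradictory, since ψ can neither stay at y, go above y, nor go below y. -/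
/-!
Fix `t₁ ∈ (t₀, t₀ + ε)`. If `ψ` stays `≥ y` on `[t₀, t₁]`, the decreasing hypothesis
on `[t₀, t₁]` forces `ψ t₁ < ψ t₀ = y`. Otherwise `ψ t < y` for some `t`, and at the last
time `s ≤ t` where `ψ = y` the increasing hypothesis applies on `[s, t]` and forces
`y = ψ s < ψ t < y`.
-/

open Set Filter Topology

theorem exists_last_eq_of_le_of_lt {α β : Type*}
    [ConditionallyCompleteLinearOrder α] [TopologicalSpace α] [OrderTopology α] [DenselyOrdered α]
    [LinearOrder β] [TopologicalSpace β] [OrderClosedTopology β]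
    {f : α → β} {a b : α} {y : β} (hab : a ≤ b) (hf : ContinuousOn f (Icc a b))
    (ha : y ≤ f a) (hb : f b < y) :
    ∃ s ∈ Ico a b, f s = y ∧ ∀ r ∈ Ioc s b, f r < y := by
  set S := Icc a b ∩ f ⁻¹' Ici y
  have hS : sSup S ∈ S :=
    (hf.preimage_isClosed_of_isClosed isClosed_Icc isClosed_Ici).csSup_mem
      ⟨a, left_mem_Icc.2 hab, ha⟩ (bddAbove_Icc.mono inter_subset_left)
  obtain ⟨⟨has, hsb⟩, hys⟩ := hS
  have hsb' : sSup S < b := hsb.lt_of_ne fun h => (h ▸ hys : y ≤ f b).not_gt hb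
  have hafter : ∀ r ∈ Ioc (sSup S) b, f r < y := fun r hr =>
    not_le.1 fun hyr => hr.1.not_ge <|
      le_csSup (bddAbove_Icc.mono inter_subset_left) ⟨⟨has.trans hr.1.le, hr.2⟩, hyr⟩
  refine ⟨sSup S, ⟨has, hsb'⟩, le_antisymm ?_ hys, hafter⟩
  have hcont : ContinuousWithinAt f (Ioc (sSup S) b) (sSup S) :=
    (hf _ ⟨has, hsb⟩).mono fun r hr => ⟨has.trans hr.1.le, hr.2⟩
  have := left_nhdsWithin_Ioc_neBot hsb'
  exact le_of_tendsto hcont (eventually_mem_nhdsWithin.mono fun r hr => (hafter r hr).le)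

/-- abstract oscillation argument of Proposition 5.2: a continuous
function `ψ` on `[t₀, t₀+ε)` with `ψ(t₀) = y` that is strictly increasing on every
subinterval with left endpoint value `y` on which it stays `< y` afterwards, and strictly
decreasing on every subinterval with left endpoint value `y` on which it stays `≥ y`,
cannot exist: the assumptions are contradictory. -/
theorem oscillation_no_solution
    (t₀ y ε : ℝ) (hε : 0 < ε)
    (ψ : ℝ → ℝ)
    (hcont : ContinuousOn ψ (Set.Ico t₀ (t₀ + ε)))
    (hψ0 : ψ t₀ = y)
    (hup : ∀ u₀ u₁, t₀ ≤ u₀ → u₀ < u₁ → u₁ < t₀ + ε → ψ u₀ = y →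
      (∀ s ∈ Set.Ioc u₀ u₁, ψ s < y) → StrictMonoOn ψ (Set.Icc u₀ u₁))
    (hdown : ∀ u₀ u₁, t₀ ≤ u₀ → u₀ < u₁ → u₁ < t₀ + ε → ψ u₀ = y →
      (∀ s ∈ Set.Icc u₀ u₁, y ≤ ψ s) → StrictAntiOn ψ (Set.Icc u₀ u₁)) :
    False := by
  obtain ⟨t₁, ht₀₁, ht₁⟩ : ∃ t₁, t₀ < t₁ ∧ t₁ < t₀ + ε := ⟨t₀ + ε / 2, by linarith, by linarith⟩
  by_cases habove : ∀ r ∈ Icc t₀ t₁, y ≤ ψ r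
  · have := hdown t₀ t₁ le_rfl ht₀₁ ht₁ hψ0 habove
      (left_mem_Icc.2 ht₀₁.le) (right_mem_Icc.2 ht₀₁.le) ht₀₁
    linarith [habove t₁ (right_mem_Icc.2 ht₀₁.le)]
  push Not at habove
  obtain ⟨t, ⟨ht₀t, htt₁⟩, hψt⟩ := habove
  have htε : t < t₀ + ε := htt₁.trans_lt ht₁
  obtain ⟨s, ⟨ht₀s, hst⟩, hψs, hbelow⟩ := exists_last_eq_of_le_of_lt ht₀t
    (hcont.mono (Icc_subset_Ico_right htε)) hψ0.ge hψt
  have := hup s t ht₀s hst htε hψs hbelow (left_mem_Icc.2 hst.le) (right_mem_Icc.2 hst.le) hst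
  linarith
end

section
/- Let Φ be the standard normal CDF and ψ(t) := Φ((−c − ∫_{t₀}^t β(s)ds)/√(v + ∫_{t₀}^t α(s)²ds)) where c ≥ 0, v > 0, α is continuous bounded with a := inf_{t ≥ t₀} α(t)² > 0 and A := sup_{t ≥ t₀} α(t)² < ∞, and β(t) ≤ −α(t)²/4. Then ψ(t) ≥ Φ(−c/√v + (a/4)(t−t₀)/√(v + A(t−t₀))) for all t ≥ t₀, and the right-hand side tends to 1 as t → ∞. -/
/-!
Since `β ≤ -α²/4`, the numerator of the argument of `Φ` is at least `-c + I/4`, where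
`I = ∫ α²` lies between `a (t - t₀)` and `A (t - t₀)`. The term `-c/√(v + I)` only grows with
`I` (as `c ≥ 0`), and `I/4 / √(v + I)` grows with its numerator and shrinks with its
denominator, so replacing `I` by its bounds gives the claimed argument of `Φ`. That argument
grows like `√(t - t₀)`, so its image under `Φ` tends to `1`.
-/

open ProbabilityTheory Filter MeasureTheory Set

lemma mul_sub_le_intervalIntegral {f : ℝ → ℝ} {m a b : ℝ} (hab : a ≤ b)
    (hf : IntervalIntegrable f volume a b) (h : ∀ x ∈ Icc a b, m ≤ f x) :
    m * (b - a) ≤ ∫ x in a..b, f x := by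
  simpa [mul_comm] using intervalIntegral.integral_mono_on hab intervalIntegrable_const hf h

lemma intervalIntegral_le_mul_sub {f : ℝ → ℝ} {M a b : ℝ} (hab : a ≤ b)
    (hf : IntervalIntegrable f volume a b) (h : ∀ x ∈ Icc a b, f x ≤ M) :
    ∫ x in a..b, f x ≤ M * (b - a) := by
  simpa [mul_comm] using intervalIntegral.integral_mono_on hab hf intervalIntegrable_const h

lemma neg_div_sqrt_add_le_sub_div_sqrt {c v a A s I J : ℝ} (hc : 0 ≤ c) (hv : 0 < v)
    (hs : 0 ≤ s) (ha : 0 ≤ a) (haI : a * s ≤ I) (hIA : I ≤ A * s) (hJ : J ≤ -I / 4) :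
    -c / √v + a / 4 * s / √(v + A * s) ≤ (-c - J) / √(v + I) := by
  have hI : 0 ≤ I := (mul_nonneg ha hs).trans haI
  have hc_term : -c / √v ≤ -c / √(v + I) := by
    rw [neg_div, neg_div, neg_le_neg_iff]
    gcongr
    linarith
  have hI_term : a / 4 * s / √(v + A * s) ≤ I / 4 / √(v + I) := by
    gcongr
    linarith
  calc -c / √v + a / 4 * s / √(v + A * s)
      ≤ -c / √(v + I) + I / 4 / √(v + I) := add_le_add hc_term hI_term
    _ = (-c + I / 4) / √(v + I) := by rw [add_div]
    _ ≤ (-c - J) / √(v + I) := by gcongr; linarith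

lemma tendsto_mul_div_sqrt_add_mul_atTop {a v A : ℝ} (ha : 0 < a) (hv : 0 ≤ v) (hA : 0 < A) :
    Tendsto (fun s => a * s / √(v + A * s)) atTop atTop := by
  have hsqrt : Tendsto (fun s => a * √s / √(v + A)) atTop atTop :=
    (Real.tendsto_sqrt_atTop.const_mul_atTop ha).atTop_div_const (by positivity)
  refine tendsto_atTop_mono' _ ?_ hsqrt
  filter_upwards [eventually_ge_atTop 1] with s hs
  -- For `s ≥ 1`, `v + A s ≤ (v + A) s`.
  have hden : √(v + A * s) ≤ √(v + A) * √s := by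
    rw [← Real.sqrt_mul (by positivity)]
    exact Real.sqrt_le_sqrt (by nlinarith)
  rw [div_le_div_iff₀ (by positivity) (by positivity)]
  calc a * √s * √(v + A * s) ≤ a * √s * (√(v + A) * √s) := by gcongr
    _ = a * (√s * √s) * √(v + A) := by ring
    _ = a * s * √(v + A) := by rw [Real.mul_self_sqrt (by linarith)]

/-- quantitative lower bound used for `ψ(t) ↑ 1` in Lemma 4.3(i):
`ψ(t) ≥ Φ(−c/√v + (a/4)(t−t₀)/√(v + A(t−t₀)))` and the lower bound tends to `1`. -/
theorem psi_lower_bound_tendsto_one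
    (t₀ c v a A : ℝ) (hc : 0 ≤ c) (hv : 0 < v) (ha : 0 < a)
    (α β : ℝ → ℝ) (hαcont : Continuous α) (hβcont : Continuous β)
    (hainf : ∀ t, t₀ ≤ t → a ≤ (α t) ^ 2)
    (hAsup : ∀ t, t₀ ≤ t → (α t) ^ 2 ≤ A)
    (hβ : ∀ t, t₀ ≤ t → β t ≤ -(α t) ^ 2 / 4)
    (ψ : ℝ → ℝ)
    (hψ : ∀ t, ψ t = cdf (gaussianReal 0 1)
      ((-c - ∫ s in t₀..t, β s) / Real.sqrt (v + ∫ s in t₀..t, (α s) ^ 2))) :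
    (∀ t, t₀ ≤ t → cdf (gaussianReal 0 1)
        (-c / Real.sqrt v + (a / 4) * (t - t₀) / Real.sqrt (v + A * (t - t₀))) ≤ ψ t) ∧
    Filter.Tendsto (fun t => cdf (gaussianReal 0 1)
        (-c / Real.sqrt v + (a / 4) * (t - t₀) / Real.sqrt (v + A * (t - t₀))))
      Filter.atTop (nhds 1) := by
  have hA : 0 < A := ha.trans_le ((hainf t₀ le_rfl).trans (hAsup t₀ le_rfl))
  refine ⟨fun t ht => ?_, ?_⟩
  · have hα2 : IntervalIntegrable (fun s => α s ^ 2) volume t₀ t :=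
      (hαcont.pow 2).intervalIntegrable _ _
    have hβ_le : ∫ s in t₀..t, β s ≤ -(∫ s in t₀..t, α s ^ 2) / 4 := by
      rw [neg_div, ← intervalIntegral.integral_div, ← intervalIntegral.integral_neg]
      exact intervalIntegral.integral_mono_on ht (hβcont.intervalIntegrable _ _)
        (hα2.div_const 4).neg fun s hs => by simpa [neg_div] using hβ s hs.1
    rw [hψ]
    exact monotone_cdf _ <| neg_div_sqrt_add_le_sub_div_sqrt hc hv (sub_nonneg.2 ht) ha.le
      (mul_sub_le_intervalIntegral ht hα2 fun s hs => hainf s hs.1)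
      (intervalIntegral_le_mul_sub ht hα2 fun s hs => hAsup s hs.1) hβ_le
  · have harg := (tendsto_mul_div_sqrt_add_mul_atTop (by positivity : 0 < a / 4) hv.le hA).comp
      (tendsto_atTop_add_const_right atTop (-t₀) tendsto_id)
    simp only [Function.comp_def, id, ← sub_eq_add_neg] at harg
    exact (tendsto_cdf_atTop _).comp (tendsto_atTop_add_const_left _ _ harg)
end
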